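/- arXiv:2101.09682 — 2 statements merged into one kernel-verified Lean document; each statement's English description precedes it below -/
import Mathlib

section
/- Let $V_0 = \sup_{\tau \in \mathcal{T}} \mathbb{E}[g(\tau, X_\tau)]$ be the value of a discrete-time optimal stopping problem on $\{0,1,\ldots,N\}$ with integrable payoffs. Then for every $(\mathcal{F}_n)$-martingale $(M_n)_{n=0}^N$ with $M_0 = 0$ and every sequence $(\varepsilon_n)_{n=0}^N$ of integrable random variables with $\mathbb{E}[\varepsilon_n \mid \mathcal{F}_n] = 0$ for all $n$, one has $V_0 \le \mathbb{E}[\max_{0 \le n \le N} (g(n, X_n) - M_n - \varepsilon_n)]$. -/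
/-!
For a stopping time `τ ≤ N`, the payoff `G τ` is the pathwise value at time `τ` of
`F n = G n - M n - ε n` plus `M τ + ε τ`, and `F τ` is dominated by `max_{n ≤ N} F n`.
The correction has mean zero: `E[M τ] = E[M 0] = 0` by optional sampling, and
`E[ε τ] = ∑ n, E[ε n; τ = n] = 0` because `{τ = n} ∈ 𝒢 n` and `E[ε n | 𝒢 n] = 0`.
-/

open MeasureTheory Finset

namespace MeasureTheory

variable {Ω : Type*} {m : MeasurableSpace Ω} {μ : Measure Ω} {𝒢 : Filtration ℕ m}
  {τ : Ω → WithTop ℕ} {N : ℕ} {E : Type*} [NormedAddCommGroup E] [NormedSpace ℝ E]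
  [CompleteSpace E]

theorem Integrable.finset_sup' {ι β : Type*} [NormedAddCommGroup β] [Lattice β]
    [HasSolidNorm β] [IsOrderedAddMonoid β] {s : Finset ι} (hs : s.Nonempty)
    {f : ι → Ω → β} (hf : ∀ i ∈ s, Integrable (f i) μ) :
    Integrable (fun ω => s.sup' hs (f · ω)) μ := by
  induction hs using Finset.Nonempty.cons_induction with
  | singleton i => simpa only [sup'_singleton] using hf i (mem_singleton_self i)
  | cons i s hi hs ih =>
    simp only [sup'_cons hs]
    exact (hf i (mem_cons_self i s)).sup (ih fun j hj => hf j (mem_cons_of_mem hj))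

theorem Martingale.integral_stoppedValue_eq_integral_zero [IsFiniteMeasure μ]
    {f : ℕ → Ω → E} (hf : Martingale f 𝒢 μ) (hτ : IsStoppingTime 𝒢 τ)
    (hτN : ∀ ω, τ ω ≤ N) :
    ∫ ω, stoppedValue f τ ω ∂μ = ∫ ω, f 0 ω ∂μ :=
  calc ∫ ω, stoppedValue f τ ω ∂μ = ∫ ω, μ[f N | hτ.measurableSpace] ω ∂μ :=
        integral_congr_ae (hf.stoppedValue_ae_eq_condExp_of_le_const hτ hτN)
    _ = ∫ ω, f N ω ∂μ := integral_condExp _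
    _ = ∫ ω, f 0 ω ∂μ := by simpa using (hf.setIntegral_eq N.zero_le MeasurableSet.univ).symm

theorem integral_stoppedValue_eq_zero_of_condExp_eq_zero [SigmaFiniteFiltration μ 𝒢]
    {ε : ℕ → Ω → E} (hτ : IsStoppingTime 𝒢 τ) (hτN : ∀ ω, τ ω ≤ N)
    (hint : ∀ n, Integrable (ε n) μ) (hcond : ∀ n, μ[ε n | 𝒢 n] =ᵐ[μ] 0) :
    ∫ ω, stoppedValue ε τ ω ∂μ = 0 := by
  have hmeas n := hτ.measurableSet_eq n
  rw [stoppedValue_eq' hτN]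
  simp only [Finset.sum_apply]
  rw [integral_finsetSum _ fun n _ => (hint n).indicator (𝒢.le n _ (hmeas n))]
  refine sum_eq_zero fun n _ => ?_
  rw [integral_indicator (𝒢.le n _ (hmeas n)),
    ← setIntegral_condExp (𝒢.le n) (hint n) (hmeas n),
    setIntegral_congr_ae (𝒢.le n _ (hmeas n)) ((hcond n).mono fun ω h _ => h)]
  simp

end MeasureTheory

/-- Dual (pathwise) upper bound for optimal stopping: for every martingale `M` with
`M 0 = 0` and every integrable sequence `ε` with `E[ε n | F_n] = 0`,
`V_0 ≤ E[max_{0 ≤ n ≤ N} (g(n,X_n) - M_n - ε_n)]`. -/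
theorem dual_upper_bound
    {Ω : Type*} {m : MeasurableSpace Ω} {μ : Measure Ω} [IsProbabilityMeasure μ]
    (𝒢 : Filtration ℕ m) (N : ℕ)
    (G : ℕ → Ω → ℝ) (hGint : ∀ n, Integrable (G n) μ)
    (M : ℕ → Ω → ℝ) (hMint : ∀ n, Integrable (M n) μ) (hMadapted : Adapted 𝒢 M)
    (hM0 : ∀ ω, M 0 ω = 0)
    (hMmart : ∀ n, μ[M (n + 1) | 𝒢 n] =ᵐ[μ] M n)
    (ε : ℕ → Ω → ℝ) (hεint : ∀ n, Integrable (ε n) μ)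
    (hεcond : ∀ n, μ[ε n | 𝒢 n] =ᵐ[μ] 0) :
    (⨆ τ : {τ : Ω → ℕ // IsStoppingTime 𝒢 (fun ω => (τ ω : WithTop ℕ)) ∧ ∀ ω, τ ω ≤ N},
        ∫ ω, G (τ.1 ω) ω ∂μ) ≤
      ∫ ω, (Finset.range (N + 1)).sup' ⟨0, by simp⟩
        (fun n => G n ω - M n ω - ε n ω) ∂μ := by
  have hM : Martingale M 𝒢 μ :=
    martingale_nat hMadapted.stronglyAdapted hMint fun n => (hMmart n).symm
  have hstop :
      Nonempty {τ : Ω → ℕ // IsStoppingTime 𝒢 (fun ω => (τ ω : WithTop ℕ)) ∧ ∀ ω, τ ω ≤ N} :=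
    ⟨⟨fun _ => 0, isStoppingTime_const 𝒢 0, fun _ => N.zero_le⟩⟩
  refine ciSup_le fun ⟨τ, hτ, hτN⟩ => ?_
  set σ : Ω → WithTop ℕ := fun ω => τ ω
  set F : ℕ → Ω → ℝ := fun n ω => G n ω - M n ω - ε n ω
  have hFint n : Integrable (F n) μ := ((hGint n).sub (hMint n)).sub (hεint n)
  have hσN ω : σ ω ≤ N := Nat.cast_le.mpr (hτN ω)
  have hFσ := integrable_stoppedValue ℕ hτ hFint hσN
  have hMσ := integrable_stoppedValue ℕ hτ hMint hσN
  have hεσ := integrable_stoppedValue ℕ hτ hεint hσN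
  have hG_eq :
      (fun ω => G (τ ω) ω) = stoppedValue F σ + stoppedValue M σ + stoppedValue ε σ := by
    ext ω
    show G (τ ω) ω = F (τ ω) ω + M (τ ω) ω + ε (τ ω) ω
    simp only [F]
    ring
  calc ∫ ω, G (τ ω) ω ∂μ
      = ∫ ω, stoppedValue F σ ω ∂μ + ∫ ω, stoppedValue M σ ω ∂μ
          + ∫ ω, stoppedValue ε σ ω ∂μ := by
        rw [hG_eq, integral_add' (hFσ.add hMσ) hεσ, integral_add' hFσ hMσ]
    _ = ∫ ω, stoppedValue F σ ω ∂μ := by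
        rw [hM.integral_stoppedValue_eq_integral_zero hτ hσN,
          integral_stoppedValue_eq_zero_of_condExp_eq_zero hτ hσN hεint hεcond]
        simp [hM0]
    _ ≤ _ := integral_mono hFσ (Integrable.finset_sup' _ fun n _ => hFint n) fun ω =>
        le_sup' (F · ω) (mem_range_succ_iff.mpr (hτN ω))
end

section
/- In the dual upper bound $V_0 \le \mathbb{E}[\max_{0 \le n \le N}(g(n,X_n) - M_n - \varepsilon_n)]$, equality holds when $M = M^Z$ is the martingale part of the Doob decomposition of the Snell envelope $Z$ and $\varepsilon \equiv 0$; i.e. $V_0 = \mathbb{E}[\max_{0 \le n \le N}(g(n,X_n) - M_n^Z)]$. -/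
/-!
Let `c k = E[Z (k+1) | 𝒢 k]` and let `Y` be the martingale part of the Doob decomposition of `Z`,
so that `Y 0 = Z 0` and `Y (k+1) - Y k = Z (k+1) - c k`; up to time `N`, `M` has the same
increments. Pathwise, `Z - Y` decreases by `Z k - c k ≥ 0` at each step `k < N`, and it stays
constant before the first time `τ*` with `Z ≤ G`, because `Z k = c k` whenever `Z k > G k`.
Since `G ≤ Z`, this gives `G n ≤ Y n` for `n ≤ N`, with equality at `τ*`. Optional stopping
for `Y` then yields `E[G τ] ≤ E[Y τ] = E[Z 0]` for every stopping time `τ ≤ N`, with equality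
at `τ*`. The same pathwise bound for `M` gives `max_{n ≤ N} (G n - M n) = Z 0` almost surely.
-/

open MeasureTheory Finset

section SnellRecursion

variable {g z c m : ℕ → ℝ} {N : ℕ}

lemma sub_eq_add_sum_of_increments (hm : ∀ k < N, m (k + 1) - m k = z (k + 1) - c k)
    {n : ℕ} (hn : n ≤ N) : z n - m n = z 0 - m 0 + ∑ k ∈ range n, (c k - z k) := by
  induction n with
  | zero => simp
  | succ n ih =>
    rw [sum_range_succ, ← add_assoc, ← ih (by omega)]
    linarith [hm n (by omega)]

lemma le_of_snell_recursion (hzN : z N = g N) (hz : ∀ n < N, z n = max (g n) (c n)) {n : ℕ}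
    (hn : n ≤ N) : g n ≤ z n := by
  rcases hn.lt_or_eq with hn | rfl
  · exact (hz n hn).symm ▸ le_max_left _ _
  · exact hzN.ge

lemma sub_le_of_snell_recursion (hzN : z N = g N) (hz : ∀ n < N, z n = max (g n) (c n))
    (hm : ∀ k < N, m (k + 1) - m k = z (k + 1) - c k) {n : ℕ} (hn : n ≤ N) :
    g n - m n ≤ z 0 - m 0 := by
  have hcz : ∑ k ∈ range n, (c k - z k) ≤ 0 :=
    sum_nonpos fun k hk => by
      rw [hz k ((mem_range.1 hk).trans_le hn)]
      linarith [le_max_right (g k) (c k)]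
  linarith [sub_eq_add_sum_of_increments hm hn, le_of_snell_recursion hzN hz hn]

lemma sub_eq_of_snell_recursion_of_forall_lt (hzN : z N = g N)
    (hz : ∀ n < N, z n = max (g n) (c n)) (hm : ∀ k < N, m (k + 1) - m k = z (k + 1) - c k)
    {j : ℕ} (hj : j ≤ N) (hlt : ∀ k < j, g k < z k) (hjz : z j ≤ g j) :
    g j - m j = z 0 - m 0 := by
  have hcz : ∑ k ∈ range j, (c k - z k) = 0 :=
    sum_eq_zero fun k hk => by
      have hk : k < j := mem_range.1 hk
      have hzk := hz k (by omega)
      rcases max_choice (g k) (c k) with h | h <;> rw [h] at hzk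
      · exact absurd hzk (hlt k hk).ne'
      · rw [hzk, sub_self]
  linarith [sub_eq_add_sum_of_increments hm hj, le_of_snell_recursion hzN hz hj]

lemma sup'_sub_eq_of_snell_recursion (hzN : z N = g N) (hz : ∀ n < N, z n = max (g n) (c n))
    (hm : ∀ k < N, m (k + 1) - m k = z (k + 1) - c k) :
    (range (N + 1)).sup' ⟨0, by simp⟩ (fun n => g n - m n) = z 0 - m 0 := by
  classical
  have hex : ∃ j, z j ≤ g j := ⟨N, hzN.le⟩
  have hj : Nat.find hex ≤ N := Nat.find_min' hex hzN.le
  refine le_antisymm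
    (sup'_le _ _ fun n hn =>
      sub_le_of_snell_recursion hzN hz hm (Nat.lt_succ_iff.1 (mem_range.1 hn))) ?_
  exact le_sup'_of_le _ (mem_range.2 (by omega))
    (sub_eq_of_snell_recursion_of_forall_lt hzN hz hm hj
      (fun k hk => lt_of_not_ge (Nat.find_min hex hk)) (Nat.find_spec hex)).ge

end SnellRecursion

namespace MeasureTheory

variable {Ω : Type*} {m0 : MeasurableSpace Ω} {μ : Measure Ω} {𝒢 : Filtration ℕ m0}

lemma ae_martingalePart_add_one_sub {E : Type*} [NormedAddCommGroup E] [NormedSpace ℝ E]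
    [CompleteSpace E] [SigmaFiniteFiltration μ 𝒢] {f : ℕ → Ω → E} (hf : StronglyAdapted 𝒢 f)
    (hf_int : ∀ n, Integrable (f n) μ) :
    ∀ᵐ ω ∂μ, ∀ n, martingalePart f 𝒢 μ (n + 1) ω - martingalePart f 𝒢 μ n ω =
      f (n + 1) ω - (μ[f (n + 1) | 𝒢 n]) ω := by
  refine ae_all_iff.2 fun n => ?_
  have hcond : μ[f (n + 1) - f n | 𝒢 n] =ᵐ[μ] μ[f (n + 1) | 𝒢 n] - f n := by
    filter_upwards [condExp_sub (m := 𝒢 n) (hf_int (n + 1)) (hf_int n)] with ω hω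
    rw [hω, Pi.sub_apply, Pi.sub_apply, condExp_of_stronglyMeasurable (𝒢.le n) (hf n) (hf_int n)]
  filter_upwards [hcond] with ω hω
  simp only [martingalePart, predictablePart_add_one, Pi.sub_apply, Pi.add_apply, hω]
  abel

lemma lt_of_lt_hittingBtwn_sub_Ici {u v : ℕ → Ω → ℝ} {N k : ℕ} {ω : Ω}
    (hk : k < hittingBtwn (u - v) (Set.Ici 0) 0 N ω) : u k ω < v k ω := by
  simpa using notMem_of_lt_hittingBtwn hk k.zero_le

lemma le_at_hittingBtwn_sub_Ici {u v : ℕ → Ω → ℝ} {N : ℕ} {ω : Ω} (hN : v N ω ≤ u N ω) :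
    v (hittingBtwn (u - v) (Set.Ici 0) 0 N ω) ω ≤ u (hittingBtwn (u - v) (Set.Ici 0) 0 N ω) ω := by
  simpa using hittingBtwn_mem_set (u := u - v) (s := Set.Ici 0) (ω := ω)
    ⟨N, ⟨N.zero_le, le_rfl⟩, by simpa using hN⟩

lemma Martingale.integral_stoppedValue_eq [IsFiniteMeasure μ] {f : ℕ → Ω → ℝ}
    (hf : Martingale f 𝒢 μ) {τ : Ω → WithTop ℕ} (hτ : IsStoppingTime 𝒢 τ) {N : ℕ}
    (hbdd : ∀ ω, τ ω ≤ N) : ∫ ω, stoppedValue f τ ω ∂μ = ∫ ω, f 0 ω ∂μ := by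
  have h0 : IsStoppingTime 𝒢 (fun _ => ((0 : ℕ) : WithTop ℕ)) := isStoppingTime_const 𝒢 0
  have hle : (fun _ => ((0 : ℕ) : WithTop ℕ)) ≤ τ := fun ω => by simp
  have h1 := hf.submartingale.expected_stoppedValue_mono h0 hτ hle hbdd
  have h2 := hf.neg.submartingale.expected_stoppedValue_mono h0 hτ hle hbdd
  have hneg : ∀ σ : Ω → WithTop ℕ, stoppedValue (-f) σ = -stoppedValue f σ := fun _ => rfl
  simp only [hneg, Pi.neg_apply, integral_neg, neg_le_neg_iff] at h2
  exact le_antisymm h2 h1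

lemma iSup_integral_eq_of_martingale_of_le_of_eq [IsFiniteMeasure μ] {G Y : ℕ → Ω → ℝ} {N : ℕ}
    (hY : Martingale Y 𝒢 μ) (hGint : ∀ n, Integrable (G n) μ)
    (hGY : ∀ᵐ ω ∂μ, ∀ n ≤ N, G n ω ≤ Y n ω)
    {τ : Ω → ℕ} (hτ : IsStoppingTime 𝒢 (fun ω => (τ ω : WithTop ℕ))) (hτN : ∀ ω, τ ω ≤ N)
    (hGτ : ∀ᵐ ω ∂μ, G (τ ω) ω = Y (τ ω) ω) :
    (⨆ σ : {σ : Ω → ℕ // IsStoppingTime 𝒢 (fun ω => (σ ω : WithTop ℕ)) ∧ ∀ ω, σ ω ≤ N},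
        ∫ ω, G (σ.1 ω) ω ∂μ) = ∫ ω, Y 0 ω ∂μ := by
  have hYσ : ∀ σ : Ω → ℕ, IsStoppingTime 𝒢 (fun ω => (σ ω : WithTop ℕ)) → (∀ ω, σ ω ≤ N) →
      ∫ ω, Y (σ ω) ω ∂μ = ∫ ω, Y 0 ω ∂μ := fun σ hσ hσN =>
    hY.integral_stoppedValue_eq hσ (fun ω => WithTop.coe_le_coe.2 (hσN ω))
  refine IsGreatest.csSup_eq ⟨⟨⟨τ, hτ, hτN⟩, ?_⟩, Set.forall_mem_range.2 fun ⟨σ, hσ, hσN⟩ => ?_⟩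
  · rw [← hYσ τ hτ hτN]
    exact integral_congr_ae hGτ
  · rw [← hYσ σ hσ hσN]
    have hσN' : ∀ ω, (σ ω : WithTop ℕ) ≤ N := fun ω => WithTop.coe_le_coe.2 (hσN ω)
    refine integral_mono_ae (integrable_stoppedValue ℕ hσ hGint hσN')
      (integrable_stoppedValue ℕ hσ hY.integrable hσN') ?_
    filter_upwards [hGY] with ω hω using hω _ (hσN ω)

end MeasureTheory

/-- Tightness of the dual upper bound: with the Doob martingale `M^Z` of the Snell
envelope and `ε ≡ 0`, equality holds:
`V_0 = E[max_{0 ≤ n ≤ N} (g(n,X_n) - M^Z_n)]`. -/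
theorem dual_upper_bound_tight
    {Ω : Type*} {m : MeasurableSpace Ω} {μ : Measure Ω} [IsProbabilityMeasure μ]
    (𝒢 : Filtration ℕ m) (N : ℕ)
    (G : ℕ → Ω → ℝ) (hGint : ∀ n, Integrable (G n) μ) (hGadapted : Adapted 𝒢 G)
    (Z : ℕ → Ω → ℝ) (hZint : ∀ n, Integrable (Z n) μ) (hZadapted : Adapted 𝒢 Z)
    (hZN : ∀ ω, Z N ω = G N ω)
    (hZrec : ∀ n < N, Z n =ᵐ[μ] fun ω => max (G n ω) ((μ[Z (n + 1) | 𝒢 n]) ω))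
    (M : ℕ → Ω → ℝ)
    (hM0 : ∀ ω, M 0 ω = 0)
    (hMinc : ∀ n, 1 ≤ n → n ≤ N →
      (fun ω => M n ω - M (n - 1) ω) =ᵐ[μ] fun ω => Z n ω - (μ[Z n | 𝒢 (n - 1)]) ω) :
    (⨆ τ : {τ : Ω → ℕ // IsStoppingTime 𝒢 (fun ω => (τ ω : WithTop ℕ)) ∧ ∀ ω, τ ω ≤ N},
        ∫ ω, G (τ.1 ω) ω ∂μ) =
      ∫ ω, (Finset.range (N + 1)).sup' ⟨0, by simp⟩ (fun n => G n ω - M n ω) ∂μ := by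
  have hrec : ∀ᵐ ω ∂μ, ∀ n < N, Z n ω = max (G n ω) ((μ[Z (n + 1) | 𝒢 n]) ω) :=
    ae_all_iff.2 fun n => Filter.eventually_imp_distrib_left.2 (hZrec n)
  have hM : ∀ᵐ ω ∂μ, ∀ k < N, M (k + 1) ω - M k ω = Z (k + 1) ω - (μ[Z (k + 1) | 𝒢 k]) ω :=
    ae_all_iff.2 fun k => Filter.eventually_imp_distrib_left.2 fun hk => by
      have h := hMinc (k + 1) (by omega) hk
      simp only [Nat.add_sub_cancel] at h
      exact h
  have hY := ae_martingalePart_add_one_sub hZadapted.stronglyAdapted hZint (μ := μ)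
  set τ := hittingBtwn (G - Z) (Set.Ici 0) 0 N
  have hτ : IsStoppingTime 𝒢 (fun ω => (τ ω : WithTop ℕ)) :=
    (hGadapted.sub hZadapted).isStoppingTime_hittingBtwn measurableSet_Ici
  rw [iSup_integral_eq_of_martingale_of_le_of_eq
    (martingale_martingalePart hZadapted.stronglyAdapted hZint) hGint ?_ hτ hittingBtwn_le ?_,
    martingalePart_zero]
  · refine integral_congr_ae ?_
    filter_upwards [hrec, hM] with ω hrec hM
    rw [sup'_sub_eq_of_snell_recursion (hZN ω) hrec hM, hM0, sub_zero]
  · filter_upwards [hrec, hY] with ω hrec hY n hn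
    have h := sub_le_of_snell_recursion (m := fun n => martingalePart Z 𝒢 μ n ω) (hZN ω) hrec
      (fun k _ => hY k) hn
    rwa [martingalePart_zero, sub_self, sub_nonpos] at h
  · filter_upwards [hrec, hY] with ω hrec hY
    have h := sub_eq_of_snell_recursion_of_forall_lt (m := fun n => martingalePart Z 𝒢 μ n ω)
      (hZN ω) hrec (fun k _ => hY k) (hittingBtwn_le ω) (fun k => lt_of_lt_hittingBtwn_sub_Ici)
      (le_at_hittingBtwn_sub_Ici (hZN ω).le)
    rwa [martingalePart_zero, sub_self, sub_eq_zero] at h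
end
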